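/- Let R, S, T be commutative ℂ-algebras. Let M be an (R ⊗_ℂ S)-module that is finitely generated and projective as an R-module, and let N be an (S ⊗_ℂ T)-module that is finitely generated and projective as an S-module. Then M ⊗_S N, regarded as an R-module, is finitely generated and projective. -/

import Mathlib

/-!
The `R`-action on `M ⊗[S] N` comes from `M` and commutes with everything `S`-linear on the right
factor, so `M ⊗[S] -` turns `S`-linear maps into `R`-linear ones and sends `ι →₀ S` to `ι →₀ M`.
A surjection `(Fin n →₀ S) → N` thus yields an `R`-linear surjection `(Fin n →₀ M) → M ⊗[S] N`,
and a splitting of `(N →₀ S) → N` exhibits `M ⊗[S] N` as an `R`-linear retract of `N →₀ M`.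
-/

open TensorProduct

section SMulCommClass

variable (R : Type*) {S : Type*} (M : Type*) {N P : Type*} [Semiring R] [CommSemiring S]
  [AddCommMonoid M] [Module R M] [Module S M] [SMulCommClass S R M]
  [AddCommMonoid N] [Module S N] [AddCommMonoid P] [Module S P]

def LinearMap.lTensorOfSMulComm (f : N →ₗ[S] P) : M ⊗[S] N →ₗ[R] M ⊗[S] P where
  __ := f.lTensor M
  map_smul' r x := by
    induction x with
    | zero => simp
    | tmul m n => simp [smul_tmul']
    | add x y hx hy => simp_all

@[simp]
theorem LinearMap.lTensorOfSMulComm_apply (f : N →ₗ[S] P) (x : M ⊗[S] N) :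
    f.lTensorOfSMulComm R M x = f.lTensor M x :=
  rfl

variable (S) in
noncomputable def TensorProduct.finsuppScalarRightOfSMulComm (ι : Type*) [DecidableEq ι] :
    M ⊗[S] (ι →₀ S) ≃ₗ[R] ι →₀ M where
  __ := finsuppScalarRight S S M ι
  map_smul' r x := by
    induction x with
    | zero => simp
    | tmul m p => ext i; simp [smul_tmul', smul_comm]
    | add x y hx hy => simp_all

theorem Module.Finite.tensorProduct_of_smulCommClass [Module.Finite R M] [Module.Finite S N] :
    Module.Finite R (M ⊗[S] N) := by
  obtain ⟨n, p, hp⟩ := Module.Finite.exists_fin' S N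
  let q := p ∘ₗ (Finsupp.linearEquivFunOnFinite S S (Fin n)).toLinearMap
  have hq : Function.Surjective q := hp.comp (LinearEquiv.surjective _)
  exact .of_surjective
    (q.lTensorOfSMulComm R M ∘ₗ (finsuppScalarRightOfSMulComm R S M (Fin n)).symm.toLinearMap)
    ((LinearMap.lTensor_surjective M hq).comp (LinearEquiv.surjective _))

theorem Module.Projective.tensorProduct_of_smulCommClass [Module.Projective R M]
    [Module.Projective S N] : Module.Projective R (M ⊗[S] N) := by
  classical
  obtain ⟨s, hs⟩ := Module.projective_def'.mp ‹Module.Projective S N›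
  have : Module.Projective R (N →₀ M) := .of_equiv (finsuppLequivDFinsupp R).symm
  let e := finsuppScalarRightOfSMulComm R S M N
  refine .of_split (e.toLinearMap ∘ₗ s.lTensorOfSMulComm R M)
    ((Finsupp.linearCombination S id).lTensorOfSMulComm R M ∘ₗ e.symm.toLinearMap) ?_
  ext x
  simp [← LinearMap.lTensor_comp_apply, hs]

end SMulCommClass

theorem stmt9_general (R S M N : Type)
    [CommRing R] [CommRing S]
    [AddCommGroup M] [Module R M] [Module S M]
    [SMulCommClass S R M]
    [AddCommGroup N] [Module S N]
    [Module.Finite R M] [Module.Projective R M]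
    [Module.Finite S N] [Module.Projective S N] :
    Module.Finite R (TensorProduct S M N) ∧
    Module.Projective R (TensorProduct S M N) :=
  ⟨.tensorProduct_of_smulCommClass R M, .tensorProduct_of_smulCommClass R M⟩

/-- let `R`, `S`, `T` be commutative `ℂ`-algebras, `M` a module
with commuting `R`- and `S`-actions (i.e. an `R ⊗ S`-module) that is finitely
generated projective over `R`, and `N` a module with commuting `S`- and
`T`-actions that is finitely generated projective over `S`.  Then `M ⊗_S N`,
as an `R`-module, is finitely generated and projective. -/
theorem stmt9 (R S T M N : Type)
    [CommRing R] [CommRing S] [CommRing T]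
    [Algebra ℂ R] [Algebra ℂ S] [Algebra ℂ T]
    [AddCommGroup M] [Module R M] [Module S M]
    [SMulCommClass R S M] [SMulCommClass S R M]
    [AddCommGroup N] [Module S N] [Module T N] [SMulCommClass S T N]
    [Module.Finite R M] [Module.Projective R M]
    [Module.Finite S N] [Module.Projective S N] :
    Module.Finite R (TensorProduct S M N) ∧
    Module.Projective R (TensorProduct S M N) :=
  stmt9_general R S M N
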